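/- For every n-th level continued fraction cylinder [a_1,…,a_n] ⊆ (0,1), the ?-image ?([a_1,…,a_n]) is a dyadic interval of length 2^{-(a_1+⋯+a_n)}. -/

import Mathlib

open MeasureTheory Set

/-- The Gauss map `x ↦ 1/x mod 1` (with `0 ↦ 0`). -/
noncomputable def gaussMap (x : ℝ) : ℝ := if x = 0 then 0 else Int.fract x⁻¹

/-- The `(k+1)`-st continued fraction partial quotient `a_{k+1}(x)`. -/
noncomputable def cfDigit (k : ℕ) (x : ℝ) : ℕ := ⌊(gaussMap^[k] x)⁻¹⌋₊

/-- `cfSum n x = a_1(x) + ⋯ + a_n(x)`. -/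
noncomputable def cfSum (n : ℕ) (x : ℝ) : ℕ := ∑ i ∈ Finset.range n, cfDigit i x

/-- Minkowski's question mark function, defined by Salem's series
`?(x) = Σ_{k≥1} (-1)^{k-1} 2^{1-(a_1+⋯+a_k)}`, which is a finite sum for rational `x`
(the terms are cut off once the Gauss-map orbit reaches `0`). -/
noncomputable def mink (x : ℝ) : ℝ :=
  ∑' k : ℕ, if gaussMap^[k] x = 0 then 0 else
    (-1 : ℝ) ^ k * (2 : ℝ) ^ ((1 : ℤ) - (cfSum (k + 1) x : ℤ))

/-!
Salem's series writes `mink x` as an alternating series whose terms at least halve from one to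
the next, so `mink` maps `[0, 1]` into itself, and splitting off the first term gives the
functional equation `?(1 / (a + y)) = 2⁻ᵃ (2 - ?(y))`. The closed cylinder of `a₁, …, aₙ` is the
image of `[0, 1]` under the inverse branch `y ↦ [0; a₁, …, aₙ + y]` of the `n`-th iterate of the
Gauss map, so its `?`-image is the image of `?([0, 1])` under a composition of the maps
`u ↦ 2⁻ᵃ (2 - u)`, each of which sends a dyadic interval of length `2⁻ˢ` in `[0, 1]` onto one of
length `2⁻⁽ᵃ⁺ˢ⁾`. It remains to see that `?([0, 1]) = [0, 1]`: expanding `t ∈ [0, 1]` greedily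
along these maps either stops at `0`, which exhibits `t` as the image of a rational, or goes on
forever, and then the nested closed cylinders of the expansion meet in a point whose image is
within `2⁻ⁿ` of `t` for every `n`.
-/

lemma gaussMap_mem_Ico (x : ℝ) : gaussMap x ∈ Ico 0 1 := by
  unfold gaussMap
  split_ifs
  · exact ⟨le_rfl, one_pos⟩
  · exact ⟨Int.fract_nonneg _, Int.fract_lt_one _⟩

lemma gaussMap_zero : gaussMap 0 = 0 := if_pos rfl

lemma gaussMap_iterate_zero (k : ℕ) : gaussMap^[k] 0 = 0 :=
  Function.iterate_fixed gaussMap_zero k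

lemma cfDigit_succ (k : ℕ) (x : ℝ) : cfDigit (k + 1) x = cfDigit k (gaussMap x) := rfl

lemma cfSum_succ (k : ℕ) (x : ℝ) : cfSum (k + 1) x = cfDigit 0 x + cfSum k (gaussMap x) := by
  simp only [cfSum, Finset.sum_range_succ', cfDigit_succ, add_comm]

lemma one_le_cfDigit {k : ℕ} {x : ℝ} (h : gaussMap^[k] x ∈ Ioc 0 1) : 1 ≤ cfDigit k x :=
  Nat.le_floor <| by simpa using one_le_inv_iff₀.2 h

lemma gaussMap_inv_natCast_add (a : ℕ) {y : ℝ} (hy : y ∈ Ico 0 1) :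
    gaussMap ((a : ℝ) + y)⁻¹ = y := by
  unfold gaussMap
  split_ifs with h
  · linarith [inv_eq_zero.1 h, hy.1, (a.cast_nonneg : (0 : ℝ) ≤ a)]
  · rw [inv_inv, Int.fract_natCast_add, Int.fract_eq_self.2 hy]

lemma cfDigit_zero_inv_natCast_add (a : ℕ) {y : ℝ} (hy : y ∈ Ico 0 1) :
    cfDigit 0 ((a : ℝ) + y)⁻¹ = a := by
  rw [cfDigit, Function.iterate_zero_apply, inv_inv, add_comm, Nat.floor_add_natCast hy.1,
    Nat.floor_eq_zero.2 hy.2, zero_add]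

lemma inv_cfDigit_add_gaussMap {x : ℝ} (hx : 0 < x) :
    ((cfDigit 0 x : ℝ) + gaussMap x)⁻¹ = x := by
  rw [cfDigit, gaussMap, if_neg hx.ne', Function.iterate_zero_apply,
    natCast_floor_eq_intCast_floor (inv_nonneg.2 hx.le), Int.floor_add_fract, inv_inv]

noncomputable def salemTerm (x : ℝ) (k : ℕ) : ℝ :=
  if gaussMap^[k] x = 0 then 0 else 2 ^ ((1 : ℤ) - cfSum (k + 1) x)

lemma mink_eq_tsum_salemTerm (x : ℝ) : mink x = ∑' k, (-1) ^ k * salemTerm x k := by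
  unfold mink salemTerm
  congr 1 with k
  split_ifs <;> simp

lemma salemTerm_nonneg (x : ℝ) (k : ℕ) : 0 ≤ salemTerm x k := by
  unfold salemTerm; split_ifs <;> positivity

lemma salemTerm_succ_le_half (x : ℝ) (k : ℕ) : salemTerm x (k + 1) ≤ salemTerm x k / 2 := by
  unfold salemTerm
  by_cases h : gaussMap^[k + 1] x = 0
  · rw [if_pos h]; split_ifs <;> positivity
  have hk : gaussMap^[k] x ≠ 0 := fun hk => h <| by
    rw [Function.iterate_succ_apply', hk, gaussMap_zero]
  have hdigit : 1 ≤ cfDigit (k + 1) x := by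
    refine one_le_cfDigit ⟨(Ne.symm h).lt_of_le ?_, ?_⟩ <;> rw [Function.iterate_succ_apply']
    exacts [(gaussMap_mem_Ico _).1, (gaussMap_mem_Ico _).2.le]
  have hsum : cfSum (k + 2) x = cfSum (k + 1) x + cfDigit (k + 1) x := Finset.sum_range_succ _ _
  rw [if_neg h, if_neg hk, div_eq_mul_inv, ← zpow_sub_one₀ two_ne_zero]
  exact zpow_le_zpow_right₀ one_le_two (by push_cast [hsum]; omega)

lemma salemTerm_le_two_mul_half_pow (x : ℝ) (k : ℕ) : salemTerm x k ≤ 2 * (1 / 2) ^ k := by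
  induction k with
  | zero =>
    unfold salemTerm
    split_ifs
    · norm_num
    · simpa using zpow_le_zpow_right₀ one_le_two (by omega : (1 : ℤ) - cfSum 1 x ≤ 1)
  | succ k ih => linarith [salemTerm_succ_le_half x k, pow_succ (1 / 2 : ℝ) k]

lemma summable_neg_one_pow_mul_salemTerm (x : ℝ) :
    Summable fun k => (-1 : ℝ) ^ k * salemTerm x k := by
  refine Summable.of_norm_bounded ((summable_geometric_two).mul_left 2) fun k => ?_
  simpa [abs_of_nonneg (salemTerm_nonneg x k)] using salemTerm_le_two_mul_half_pow x k

lemma mink_mem_Icc {x : ℝ} (hx : x ∈ Icc 0 1) : mink x ∈ Icc 0 1 := by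
  have hanti : Antitone (salemTerm x) := antitone_nat_of_succ_le fun k => by
    linarith [salemTerm_succ_le_half x k, salemTerm_nonneg x k]
  have hlim := (summable_neg_one_pow_mul_salemTerm x).hasSum.tendsto_sum_nat
  rw [← mink_eq_tsum_salemTerm] at hlim
  refine ⟨by simpa using hanti.alternating_series_le_tendsto hlim 0, ?_⟩
  have hfirst : mink x ≤ salemTerm x 0 := by
    simpa using hanti.tendsto_le_alternating_series hlim 0
  refine hfirst.trans ?_
  unfold salemTerm
  split_ifs with h0
  · exact zero_le_one
  · have : 1 ≤ cfSum (0 + 1) x := by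
      simpa [cfSum] using one_le_cfDigit ⟨(Ne.symm h0).lt_of_le hx.1, hx.2⟩
    exact zpow_le_one_of_nonpos₀ one_le_two (by omega)

noncomputable def minkStep (a : ℕ) (u : ℝ) : ℝ := (2 ^ a)⁻¹ * (2 - u)

lemma mink_eq_of_ne_zero {x : ℝ} (hx : x ≠ 0) :
    mink x = minkStep (cfDigit 0 x) (mink (gaussMap x)) := by
  have hzero : salemTerm x 0 = 2 * (2 ^ cfDigit 0 x)⁻¹ := by
    rw [salemTerm, Function.iterate_zero_apply, if_neg hx, cfSum_succ, cfSum,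
      Finset.sum_range_zero, add_zero, ← zpow_natCast, ← zpow_neg, ← zpow_one_add₀ two_ne_zero,
      sub_eq_add_neg]
  have hsucc (k : ℕ) : (-1) ^ (k + 1) * salemTerm x (k + 1) =
      -(2 ^ cfDigit 0 x)⁻¹ * ((-1) ^ k * salemTerm (gaussMap x) k) := by
    simp only [salemTerm, Function.iterate_succ_apply, cfSum_succ (k + 1)]
    split_ifs
    · simp
    · have hsplit : (2 : ℝ) ^ ((1 : ℤ) - ↑(cfDigit 0 x + cfSum (k + 1) (gaussMap x))) =
          (2 ^ cfDigit 0 x)⁻¹ * 2 ^ ((1 : ℤ) - cfSum (k + 1) (gaussMap x)) := by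
        rw [← zpow_natCast, ← zpow_neg, ← zpow_add₀ two_ne_zero]
        push_cast; ring_nf
      rw [hsplit, pow_succ]
      ring
  rw [mink_eq_tsum_salemTerm, (summable_neg_one_pow_mul_salemTerm x).tsum_eq_zero_add,
    mink_eq_tsum_salemTerm, minkStep]
  simp only [hsucc, tsum_mul_left, hzero]
  ring

lemma mink_zero : mink 0 = 0 := by
  simp [mink, gaussMap_iterate_zero]

lemma mink_inv_natCast_add_of_mem_Ico {a : ℕ} (ha : 1 ≤ a) {y : ℝ} (hy : y ∈ Ico 0 1) :
    mink ((a : ℝ) + y)⁻¹ = minkStep a (mink y) := by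
  have hpos : (0 : ℝ) < a + y := by
    have : (1 : ℝ) ≤ a := by exact_mod_cast ha
    linarith [hy.1]
  rw [mink_eq_of_ne_zero (inv_ne_zero hpos.ne'), cfDigit_zero_inv_natCast_add a hy,
    gaussMap_inv_natCast_add a hy]

lemma mink_one : mink 1 = 1 := by
  simpa [mink_zero, minkStep] using
    mink_inv_natCast_add_of_mem_Ico le_rfl (y := 0) ⟨le_rfl, one_pos⟩

lemma mink_inv_natCast_add {a : ℕ} (ha : 1 ≤ a) {y : ℝ} (hy : y ∈ Icc 0 1) :
    mink ((a : ℝ) + y)⁻¹ = minkStep a (mink y) := by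
  rcases hy.2.lt_or_eq with hy1 | rfl
  · exact mink_inv_natCast_add_of_mem_Ico ha ⟨hy.1, hy1⟩
  · have := mink_inv_natCast_add_of_mem_Ico (a := a + 1) (by omega) (y := 0) ⟨le_rfl, one_pos⟩
    push_cast at this
    rw [add_zero, mink_zero] at this
    rw [this, mink_one, minkStep, minkStep, pow_succ]
    ring

lemma inv_natCast_add_mem_Icc {a : ℕ} (ha : 1 ≤ a) {y : ℝ} (hy : 0 ≤ y) :
    ((a : ℝ) + y)⁻¹ ∈ Icc 0 1 := by
  have : (1 : ℝ) ≤ a := by exact_mod_cast ha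
  exact ⟨by positivity, inv_le_one_of_one_le₀ (by linarith)⟩

lemma exists_minkStep_image_dyadic {a : ℕ} (ha : 1 ≤ a) {s m : ℕ} (hm : m + 1 ≤ 2 ^ s) :
    ∃ m' : ℕ, m' + 1 ≤ 2 ^ (a + s) ∧
      minkStep a '' Icc ((m : ℝ) / 2 ^ s) ((m + 1) / 2 ^ s) =
        Icc ((m' : ℝ) / 2 ^ (a + s)) ((m' + 1) / 2 ^ (a + s)) := by
  have hle : m + 1 ≤ 2 ^ (s + 1) := hm.trans (Nat.pow_le_pow_right two_pos s.le_succ)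
  refine ⟨2 ^ (s + 1) - (m + 1), ?_, ?_⟩
  · have := Nat.pow_le_pow_right two_pos (by omega : s + 1 ≤ a + s)
    omega
  · rw [show minkStep a = (fun u => (2 ^ a)⁻¹ * u) ∘ (fun u => 2 - u) from rfl, image_comp,
      image_const_sub_Icc, image_mul_left_Icc (by positivity) (by gcongr; linarith)]
    push_cast [Nat.cast_sub hle]
    congr 1 <;> field_simp <;> ring

/-- `gaussBranch a y = [0; a₀, …, aₙ₋₂, aₙ₋₁ + y]`, the inverse branch of `gaussMap^[n]` on the
cylinder of `a`. -/
noncomputable def gaussBranch : {n : ℕ} → (Fin n → ℕ) → ℝ → ℝ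
  | 0, _, y => y
  | _ + 1, a, y => ((a 0 : ℝ) + gaussBranch (Fin.tail a) y)⁻¹

noncomputable def minkBranch : {n : ℕ} → (Fin n → ℕ) → ℝ → ℝ
  | 0, _, u => u
  | _ + 1, a, u => minkStep (a 0) (minkBranch (Fin.tail a) u)

section Branch

variable {n : ℕ} {a : Fin n → ℕ}

lemma gaussBranch_mem_Icc (ha : ∀ i, 1 ≤ a i) {y : ℝ} (hy : y ∈ Icc 0 1) :
    gaussBranch a y ∈ Icc 0 1 := by
  induction n with
  | zero => exact hy
  | succ n ih => exact inv_natCast_add_mem_Icc (ha 0) (ih (fun i => ha i.succ)).1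

lemma continuousOn_gaussBranch (ha : ∀ i, 1 ≤ a i) :
    ContinuousOn (gaussBranch a) (Icc 0 1) := by
  induction n with
  | zero => exact continuousOn_id
  | succ n ih =>
    refine (continuousOn_const.add (ih fun i => ha i.succ)).inv₀ fun y hy => ?_
    have : (1 : ℝ) ≤ a 0 := by exact_mod_cast ha 0
    show (a 0 : ℝ) + gaussBranch (Fin.tail a) y ≠ 0
    linarith [(gaussBranch_mem_Icc (a := Fin.tail a) (fun i => ha i.succ) hy).1]

lemma mink_gaussBranch (ha : ∀ i, 1 ≤ a i) {y : ℝ} (hy : y ∈ Icc 0 1) :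
    mink (gaussBranch a y) = minkBranch a (mink y) := by
  induction n with
  | zero => rfl
  | succ n ih =>
    rw [gaussBranch, minkBranch, ← ih (a := Fin.tail a) fun i => ha i.succ]
    exact mink_inv_natCast_add (ha 0) (gaussBranch_mem_Icc (fun i => ha i.succ) hy)

lemma exists_minkBranch_image_Icc (ha : ∀ i, 1 ≤ a i) :
    ∃ m : ℕ, m + 1 ≤ 2 ^ ∑ i, a i ∧
      minkBranch a '' Icc 0 1 = Icc ((m : ℝ) / 2 ^ ∑ i, a i) ((m + 1) / 2 ^ ∑ i, a i) := by
  induction n with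
  | zero => exact ⟨0, by simp, by simp [minkBranch]⟩
  | succ n ih =>
    obtain ⟨m, hm, himage⟩ := ih fun i => ha i.succ
    rw [Fin.sum_univ_succ]
    refine exists_minkStep_image_dyadic (ha 0) hm |>.imp fun m' => And.imp_right fun h => ?_
    rw [← h, ← himage, image_image]
    rfl

end Branch

def cylinder {n : ℕ} (a : Fin n → ℕ) : Set ℝ :=
  {x | x ∈ Ioo 0 1 ∧ ∀ i : Fin n, cfDigit i x = a i}

section Cylinder

variable {n : ℕ} {a : Fin n → ℕ}

lemma gaussBranch_mem_cylinder (ha : ∀ i, 1 ≤ a i) {y : ℝ} (hy : y ∈ Ioo 0 1) :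
    gaussBranch a y ∈ cylinder a := by
  induction n with
  | zero => exact ⟨hy, finZeroElim⟩
  | succ n ih =>
    obtain ⟨⟨hz0, hz1⟩, hdigits⟩ := ih (a := Fin.tail a) fun i => ha i.succ
    set z := gaussBranch (Fin.tail a) y
    have hz : z ∈ Ico 0 1 := ⟨hz0.le, hz1⟩
    have h1 : (1 : ℝ) < a 0 + z := by
      have : (1 : ℝ) ≤ a 0 := by exact_mod_cast ha 0
      linarith
    refine ⟨⟨inv_pos.2 (by linarith), inv_lt_one_of_one_lt₀ h1⟩, Fin.cases ?_ fun i => ?_⟩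
    · exact cfDigit_zero_inv_natCast_add _ hz
    · rw [Fin.val_succ, cfDigit_succ]
      change cfDigit i (gaussMap ((a 0 : ℝ) + z)⁻¹) = Fin.tail a i
      rw [gaussMap_inv_natCast_add _ hz, hdigits]

lemma gaussBranch_gaussMap_iterate (ha : ∀ i, 1 ≤ a i) {x : ℝ} (hx : x ∈ Icc 0 1)
    (hdigits : ∀ i : Fin n, cfDigit i x = a i) : gaussBranch a (gaussMap^[n] x) = x := by
  induction n generalizing x with
  | zero => rfl
  | succ n ih =>
    have hx0 : x ≠ 0 := by
      rintro rfl
      simpa [← hdigits 0, cfDigit] using ha 0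
    have hGx : gaussMap x ∈ Icc 0 1 := Ico_subset_Icc_self (gaussMap_mem_Ico x)
    rw [gaussBranch, Function.iterate_succ_apply,
      ih (a := Fin.tail a) (fun i => ha i.succ) hGx fun i => hdigits i.succ, ← hdigits 0,
      Fin.val_zero]
    exact inv_cfDigit_add_gaussMap (hx.1.lt_of_ne' hx0)

lemma closure_cylinder (ha : ∀ i, 1 ≤ a i) :
    closure (cylinder a) = gaussBranch a '' Icc 0 1 := by
  have hcompact : IsCompact (gaussBranch a '' Icc 0 1) :=
    isCompact_Icc.image_of_continuousOn (continuousOn_gaussBranch ha)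
  refine (closure_minimal (fun x hx => ?_) hcompact.isClosed).antisymm ?_
  · refine ⟨gaussMap^[n] x, ?_,
      gaussBranch_gaussMap_iterate ha (Ioo_subset_Icc_self hx.1) hx.2⟩
    cases n with
    | zero => exact Ioo_subset_Icc_self hx.1
    | succ n =>
      rw [Function.iterate_succ_apply']
      exact Ico_subset_Icc_self (gaussMap_mem_Ico _)
  · calc gaussBranch a '' Icc 0 1 = gaussBranch a '' closure (Ioo 0 1) := by
          rw [closure_Ioo zero_ne_one]
      _ ⊆ closure (gaussBranch a '' Ioo 0 1) := ContinuousOn.image_closure <| by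
          rw [closure_Ioo zero_ne_one]
          exact continuousOn_gaussBranch ha
      _ ⊆ closure (cylinder a) :=
          closure_mono <| image_subset_iff.2 fun y hy => gaussBranch_mem_cylinder ha hy

lemma mink_image_closure_cylinder (ha : ∀ i, 1 ≤ a i) :
    mink '' closure (cylinder a) = minkBranch a '' (mink '' Icc 0 1) := by
  rw [closure_cylinder ha, image_image, image_image]
  exact image_congr fun y hy => mink_gaussBranch ha hy

end Cylinder

lemma exists_minkStep_eq {u : ℝ} (hu : u ∈ Ioc 0 1) :
    ∃ a : ℕ, 1 ≤ a ∧ ∃ v ∈ Icc (0 : ℝ) 1, minkStep a v = u := by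
  obtain ⟨k, hk, hk'⟩ := exists_nat_pow_near (one_le_inv_iff₀.2 hu) one_lt_two
  have hlow : 2 ^ k * u ≤ 1 := by
    simpa [inv_mul_cancel₀ hu.1.ne'] using mul_le_mul_of_nonneg_right hk hu.1.le
  have hhigh : 1 < 2 ^ (k + 1) * u := by
    simpa [inv_mul_cancel₀ hu.1.ne'] using mul_lt_mul_of_pos_right hk' hu.1
  refine ⟨k + 1, Nat.le_add_left 1 k, 2 - 2 ^ (k + 1) * u, ⟨?_, by linarith⟩, ?_⟩
  · rw [pow_succ]
    linarith
  · rw [minkStep]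
    field_simp
    ring

lemma minkBranch_greedy_expansion {d : ℝ → ℕ} {next : ℝ → ℝ} (hd : ∀ u ∈ Ioc (0 : ℝ) 1, 1 ≤ d u)
    (hnext : ∀ u ∈ Ioc (0 : ℝ) 1, next u ∈ Icc 0 1)
    (heq : ∀ u ∈ Ioc (0 : ℝ) 1, minkStep (d u) (next u) = u) (n : ℕ) {t : ℝ}
    (ht : t ∈ Icc 0 1) (hne : ∀ k < n, next^[k] t ≠ 0) :
    (∀ i : Fin n, 1 ≤ d (next^[i] t)) ∧ next^[n] t ∈ Icc 0 1 ∧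
      minkBranch (fun i : Fin n => d (next^[i] t)) (next^[n] t) = t := by
  induction n generalizing t with
  | zero => exact ⟨finZeroElim, ht, rfl⟩
  | succ n ih =>
    have ht' : t ∈ Ioc 0 1 := ⟨ht.1.lt_of_ne' (hne 0 n.succ_pos), ht.2⟩
    obtain ⟨hdigits, hmem, hbranch⟩ := ih (hnext t ht') fun k hk => hne (k + 1) (by omega)
    refine ⟨Fin.cases (hd t ht') hdigits, hmem, ?_⟩
    change minkStep (d t) (minkBranch (fun i : Fin n => d (next^[i] (next t)))
      (next^[n] (next t))) = t
    rw [hbranch, heq t ht']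

lemma abs_sub_le_of_mem_image_minkBranch {n : ℕ} {a : Fin n → ℕ} (ha : ∀ i, 1 ≤ a i) {u v : ℝ}
    (hu : u ∈ minkBranch a '' Icc 0 1) (hv : v ∈ minkBranch a '' Icc 0 1) :
    |u - v| ≤ (1 / 2) ^ n := by
  obtain ⟨m, -, himage⟩ := exists_minkBranch_image_Icc ha
  rw [himage] at hu hv
  have hn : n ≤ ∑ i, a i := by simpa using Finset.card_nsmul_le_sum Finset.univ a 1 fun i _ => ha i
  calc |u - v| ≤ (m + 1) / 2 ^ ∑ i, a i - m / 2 ^ ∑ i, a i :=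
        abs_sub_le_of_le_of_le hu.1 hu.2 hv.1 hv.2
    _ = (1 / 2) ^ ∑ i, a i := by rw [← sub_div, add_sub_cancel_left, one_div_pow]
    _ ≤ (1 / 2) ^ n := pow_le_pow_of_le_one (by norm_num) (by norm_num) hn

lemma mink_image_Icc : mink '' Icc 0 1 = Icc 0 1 := by
  have hmaps : MapsTo mink (Icc 0 1) (Icc 0 1) := fun _ => mink_mem_Icc
  refine hmaps.image_subset.antisymm fun t ht => ?_
  choose! d hd next hnext heq using fun u (hu : u ∈ Ioc (0 : ℝ) 1) => exists_minkStep_eq hu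
  have greedy := minkBranch_greedy_expansion hd hnext heq (t := t)
  by_cases hzero : ∃ k, next^[k] t = 0
  · classical
    obtain ⟨k, hk, hmin⟩ : ∃ k, next^[k] t = 0 ∧ ∀ j < k, next^[j] t ≠ 0 :=
      ⟨Nat.find hzero, Nat.find_spec hzero, fun j => Nat.find_min hzero⟩
    obtain ⟨hdigits, -, hbranch⟩ := greedy k ht hmin
    have h0 : (0 : ℝ) ∈ Icc 0 1 := ⟨le_rfl, zero_le_one⟩
    rw [hk, ← mink_zero, ← mink_gaussBranch hdigits h0] at hbranch
    exact ⟨_, gaussBranch_mem_Icc hdigits h0, hbranch⟩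
  rw [not_exists] at hzero
  set C : ℕ → Set ℝ := fun n => closure (cylinder fun i : Fin n => d (next^[i] t))
  have hC : ∀ n, C n ⊆ Icc 0 1 := fun n =>
    closure_minimal (fun x hx => Ioo_subset_Icc_self hx.1) isClosed_Icc
  obtain ⟨x, hx⟩ := IsCompact.nonempty_iInter_of_sequence_nonempty_isCompact_isClosed C
    (fun n => closure_mono fun x hx => ⟨hx.1, fun i => hx.2 i.castSucc⟩)
    (fun n => ⟨_, subset_closure <|
      gaussBranch_mem_cylinder (greedy n ht fun k _ => hzero k).1 ⟨one_half_pos, one_half_lt_one⟩⟩)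
    (isCompact_Icc.of_isClosed_subset isClosed_closure (hC 0)) fun n => isClosed_closure
  rw [mem_iInter] at hx
  refine ⟨x, hC 0 (hx 0), eq_of_forall_dist_le fun ε hε => ?_⟩
  obtain ⟨n, hn⟩ := exists_pow_lt_of_lt_one hε one_half_lt_one
  obtain ⟨hdigits, hmem, hbranch⟩ := greedy n ht fun k _ => hzero k
  have hx' : mink x ∈ minkBranch (fun i : Fin n => d (next^[i] t)) '' Icc 0 1 := by
    have := mem_image_of_mem mink (hx n)
    rw [mink_image_closure_cylinder hdigits] at this
    exact image_mono hmaps.image_subset this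
  exact (abs_sub_le_of_mem_image_minkBranch hdigits hx' ⟨_, hmem, hbranch⟩).trans hn.le

theorem mink_image_cylinder_general (n : ℕ) (a : Fin n → ℕ) (ha : ∀ i, 1 ≤ a i) :
    ∃ m : ℕ,
      mink '' closure {x : ℝ | x ∈ Ioo (0 : ℝ) 1 ∧ ∀ i : Fin n, cfDigit i x = a i} =
        Icc ((m : ℝ) / 2 ^ (∑ i, a i)) (((m : ℝ) + 1) / 2 ^ (∑ i, a i)) := by
  obtain ⟨m, -, himage⟩ := exists_minkBranch_image_Icc ha
  exact ⟨m, by rw [← himage, ← mink_image_Icc]; exact mink_image_closure_cylinder ha⟩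

/-- The `?`-image of an `n`-th level continued fraction cylinder `[a_1,…,a_n]` is a dyadic
interval of length `2^{-(a_1+⋯+a_n)}`. -/
theorem mink_image_cylinder (n : ℕ) (hn : 1 ≤ n) (a : Fin n → ℕ) (ha : ∀ i, 1 ≤ a i) :
    ∃ m : ℕ,
      mink '' closure {x : ℝ | x ∈ Ioo (0 : ℝ) 1 ∧ ∀ i : Fin n, cfDigit i x = a i} =
        Icc ((m : ℝ) / 2 ^ (∑ i, a i)) (((m : ℝ) + 1) / 2 ^ (∑ i, a i)) :=
  mink_image_cylinder_general n a ha
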